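/- Let n ≥ 1, let w ∈ A₁, let 0 < β < 1 and let b ∈ Lip_{β,w}. Then there exists a constant C > 0 such that for every cube Q ⊂ ℝⁿ, |b(x) − b_Q| ≤ C ‖b‖_{Lip_{β,w}} w(Q)^{β/n} w(x) for a.e. x ∈ Q. -/

import Mathlib

open MeasureTheory

noncomputable section

/-- An axis-parallel cube in `ℝⁿ` (with positive side length). -/
def IsCube {n : ℕ} (Q : Set (Fin n → ℝ)) : Prop :=
  ∃ (a : Fin n → ℝ) (h : ℝ), 0 < h ∧ Q = Set.univ.pi fun i => Set.Icc (a i) (a i + h)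

/-- The average `f_Q = |Q|⁻¹ ∫_Q f` of `f` over `Q`. -/
def cubeAvg {n : ℕ} (Q : Set (Fin n → ℝ)) (f : (Fin n → ℝ) → ℝ) : ℝ :=
  (MeasureTheory.volume Q).toReal⁻¹ * ∫ y in Q, f y

/-- A weight: a nonnegative locally integrable function, positive a.e. -/
def IsWeight {n : ℕ} (μ : (Fin n → ℝ) → ℝ) : Prop :=
  MeasureTheory.LocallyIntegrable μ ∧ (∀ x, 0 ≤ μ x) ∧
    ∀ᵐ x ∂(MeasureTheory.volume : Measure (Fin n → ℝ)), 0 < μ x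

/-- The Muckenhoupt `A₁` class. -/
def IsA1 {n : ℕ} (μ : (Fin n → ℝ) → ℝ) : Prop :=
  IsWeight μ ∧ ∃ C > 0, ∀ Q : Set (Fin n → ℝ), IsCube Q →
    ∀ᵐ x ∂(MeasureTheory.volume.restrict Q), cubeAvg Q μ ≤ C * μ x

/-- The Muckenhoupt `A_p` class for `1 < p < ∞`. -/
def IsAp {n : ℕ} (μ : (Fin n → ℝ) → ℝ) (p : ℝ) : Prop :=
  IsWeight μ ∧ ∃ C : ℝ, ∀ Q : Set (Fin n → ℝ), IsCube Q →
    cubeAvg Q μ * (cubeAvg Q fun x => μ x ^ (1 - p / (p - 1))) ^ (p - 1) ≤ C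

/-- The Muckenhoupt `A_∞` class, `A_∞ = ⋃_{1 ≤ p < ∞} A_p`. -/
def IsAinfty {n : ℕ} (μ : (Fin n → ℝ) → ℝ) : Prop :=
  IsA1 μ ∨ ∃ p : ℝ, 1 < p ∧ IsAp μ p

/-- The set of quantities defining the weighted Lipschitz norm of `b`. -/
def lipSet {n : ℕ} (β : ℝ) (μ b : (Fin n → ℝ) → ℝ) : Set ℝ :=
  { r | ∃ Q : Set (Fin n → ℝ), IsCube Q ∧
      r = (∫ x in Q, μ x) ^ (-(β / (n : ℝ))) * (∫ x in Q, μ x)⁻¹ *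
            ∫ x in Q, |b x - cubeAvg Q b| }

/-- The weighted Lipschitz norm `‖b‖_{Lip_{β,μ}}`. -/
def lipNorm {n : ℕ} (β : ℝ) (μ b : (Fin n → ℝ) → ℝ) : ℝ := sSup (lipSet β μ b)

/-- Membership `b ∈ Lip_{β,μ}`. -/
def MemLip {n : ℕ} (β : ℝ) (μ b : (Fin n → ℝ) → ℝ) : Prop :=
  MeasureTheory.LocallyIntegrable b ∧ BddAbove (lipSet β μ b)

/-- The set of averages defining the Hardy–Littlewood maximal function at `x`. -/
def hlMaxSet {n : ℕ} (f : (Fin n → ℝ) → ℝ) (x : Fin n → ℝ) : Set ℝ :=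
  { r | ∃ Q : Set (Fin n → ℝ), IsCube Q ∧ x ∈ Q ∧
      r = (MeasureTheory.volume Q).toReal⁻¹ * ∫ y in Q, |f y| }

/-- The Hardy–Littlewood maximal function `M(f)(x)`. -/
def hlMax {n : ℕ} (f : (Fin n → ℝ) → ℝ) (x : Fin n → ℝ) : ℝ := sSup (hlMaxSet f x)

/-- The set of quantities defining the sharp maximal function at `x`. -/
def sharpMaxSet {n : ℕ} (f : (Fin n → ℝ) → ℝ) (x : Fin n → ℝ) : Set ℝ :=
  { r | ∃ Q : Set (Fin n → ℝ), IsCube Q ∧ x ∈ Q ∧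
      r = (MeasureTheory.volume Q).toReal⁻¹ * ∫ y in Q, |f y - cubeAvg Q f| }

/-- The sharp maximal function `M♯(f)(x)`. -/
def sharpMax {n : ℕ} (f : (Fin n → ℝ) → ℝ) (x : Fin n → ℝ) : ℝ := sSup (sharpMaxSet f x)

/-- The local maximal function `M_{Q₀}(f)(x)` relative to a cube `Q₀`. -/
def localMax {n : ℕ} (Q₀ : Set (Fin n → ℝ)) (f : (Fin n → ℝ) → ℝ) (x : Fin n → ℝ) : ℝ :=
  sSup { r | ∃ Q : Set (Fin n → ℝ), IsCube Q ∧ Q ⊆ Q₀ ∧ x ∈ Q ∧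
      r = (MeasureTheory.volume Q).toReal⁻¹ * ∫ y in Q, |f y| }

/-- The maximal commutator `M_b(f)(x)`. -/
def maxCommutator {n : ℕ} (b f : (Fin n → ℝ) → ℝ) (x : Fin n → ℝ) : ℝ :=
  sSup { r | ∃ Q : Set (Fin n → ℝ), IsCube Q ∧ x ∈ Q ∧
      r = (MeasureTheory.volume Q).toReal⁻¹ * ∫ y in Q, |b x - b y| * |f y| }

/-- The (nonlinear) commutator `[b, M](f)(x) = b(x) M(f)(x) - M(bf)(x)`. -/
def commM {n : ℕ} (b f : (Fin n → ℝ) → ℝ) (x : Fin n → ℝ) : ℝ :=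
  b x * hlMax f x - hlMax (fun y => b y * f y) x

/-- The commutator `[b, M♯](f)(x) = b(x) M♯(f)(x) - M♯(bf)(x)`. -/
def commSharp {n : ℕ} (b f : (Fin n → ℝ) → ℝ) (x : Fin n → ℝ) : ℝ :=
  b x * sharpMax f x - sharpMax (fun y => b y * f y) x

/-- The weighted fractional maximal function `M_{β,μ,r}(f)(x)`. -/
def fracMax {n : ℕ} (β : ℝ) (μ : (Fin n → ℝ) → ℝ) (r : ℝ) (f : (Fin n → ℝ) → ℝ)
    (x : Fin n → ℝ) : ℝ :=
  sSup { t | ∃ Q : Set (Fin n → ℝ), IsCube Q ∧ x ∈ Q ∧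
      t = ((∫ y in Q, μ y) ^ (-(1 - r * β / (n : ℝ))) * ∫ y in Q, |f y| ^ r * μ y) ^ (1 / r) }

/-- The two-weight Morrey norm `‖f‖_{L^{p,κ}(u,v)}`. -/
def morreyNorm2 {n : ℕ} (p κ : ℝ) (u v f : (Fin n → ℝ) → ℝ) : ℝ :=
  sSup { r | ∃ Q : Set (Fin n → ℝ), IsCube Q ∧
      r = ((∫ x in Q, v x) ^ (-κ) * ∫ x in Q, |f x| ^ p * u x) ^ (1 / p) }

/-- The one-weight Morrey norm `‖f‖_{L^{p,κ}(μ)}`. -/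
def morreyNorm {n : ℕ} (p κ : ℝ) (μ f : (Fin n → ℝ) → ℝ) : ℝ := morreyNorm2 p κ μ μ f

/-- Membership `f ∈ L^{p,κ}(μ)`: local `L^p(μ)`-integrability and finiteness of the norm. -/
def MemMorrey {n : ℕ} (p κ : ℝ) (μ f : (Fin n → ℝ) → ℝ) : Prop :=
  (∀ Q : Set (Fin n → ℝ), IsCube Q →
      MeasureTheory.IntegrableOn (fun x => |f x| ^ p * μ x) Q) ∧
  BddAbove { r | ∃ Q : Set (Fin n → ℝ), IsCube Q ∧
      r = ((∫ x in Q, μ x) ^ (-κ) * ∫ x in Q, |f x| ^ p * μ x) ^ (1 / p) }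


namespace LipAux

open Set Metric Filter

variable {n : ℕ}

/-- The axis-parallel cube with corner `a` and side `h`. -/
def cube (a : Fin n → ℝ) (h : ℝ) : Set (Fin n → ℝ) :=
  Set.univ.pi fun i => Set.Icc (a i) (a i + h)

lemma isCube_cube {a : Fin n → ℝ} {h : ℝ} (hh : 0 < h) : IsCube (cube a h) := ⟨a, h, hh, rfl⟩

lemma cube_volume (a : Fin n → ℝ) (h : ℝ) : volume (cube a h) = ENNReal.ofReal h ^ n := by
  rw [cube, volume_pi, Measure.pi_pi]; simp [Real.volume_Icc]

lemma cube_volume_toReal (a : Fin n → ℝ) {h : ℝ} (hh : 0 ≤ h) :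
    (volume (cube a h)).toReal = h ^ n := by
  rw [cube_volume]; simp [← ENNReal.ofReal_pow hh, pow_nonneg hh]

lemma cube_volume_ne_top (a : Fin n → ℝ) (h : ℝ) : volume (cube a h) ≠ ⊤ := by
  rw [cube_volume]
  exact ENNReal.pow_ne_top ENNReal.ofReal_ne_top

lemma measurableSet_cube (a : Fin n → ℝ) (h : ℝ) : MeasurableSet (cube a h) :=
  MeasurableSet.univ_pi fun _ => measurableSet_Icc

lemma isCompact_cube (a : Fin n → ℝ) (h : ℝ) : IsCompact (cube a h) :=
  isCompact_univ_pi fun _ => isCompact_Icc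

lemma mem_cube {a x : Fin n → ℝ} {h : ℝ} : x ∈ cube a h ↔ ∀ i, a i ≤ x i ∧ x i ≤ a i + h := by
  simp only [cube, Set.mem_pi, mem_univ, forall_true_left, Set.mem_Icc]

lemma cube_subset {a a' : Fin n → ℝ} {h h' : ℝ} (H : ∀ i, a i ≤ a' i ∧ a' i + h' ≤ a i + h) :
    cube a' h' ⊆ cube a h := by
  intro x hx
  rw [mem_cube] at hx ⊢
  exact fun i => ⟨(H i).1.trans (hx i).1, (hx i).2.trans (by linarith [(H i).2])⟩

lemma cube_eq_closedBall (a : Fin n → ℝ) {h : ℝ} (hh : 0 ≤ h) :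
    cube a h = closedBall (fun i => a i + h / 2) (h / 2) := by
  rw [closedBall_pi _ (by linarith)]
  ext x
  simp only [cube, Set.mem_pi, mem_univ, forall_true_left, Real.closedBall_eq_Icc, Set.mem_Icc]
  refine forall_congr' fun i => ?_
  constructor <;> rintro ⟨h1, h2⟩ <;> constructor <;> linarith

lemma integrableOn_cube {f : (Fin n → ℝ) → ℝ} (hf : LocallyIntegrable f) (a : Fin n → ℝ)
    (h : ℝ) : IntegrableOn f (cube a h) := hf.integrableOn_isCompact (isCompact_cube a h)

/-- positivity of `∫_Q w` for a weight. -/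
lemma cube_weight_pos {w : (Fin n → ℝ) → ℝ} (hw : IsWeight w) (a : Fin n → ℝ) {h : ℝ}
    (hh : 0 < h) : 0 < ∫ x in cube a h, w x := by
  obtain ⟨hli, hnn, hpos⟩ := hw
  rw [setIntegral_pos_iff_support_of_nonneg_ae
      (Filter.Eventually.of_forall fun x => hnn x : 0 ≤ᵐ[volume.restrict (cube a h)] w)
      (integrableOn_cube hli a h)]
  have hnull : volume {x : Fin n → ℝ | ¬ 0 < w x} = 0 := by
    simpa [ae_iff] using hpos
  have hmono : volume (cube a h) ≤ volume (Function.support w ∩ cube a h) + 0 := by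
    rw [← hnull]
    calc volume (cube a h)
        ≤ volume ((Function.support w ∩ cube a h) ∪ {x | ¬ 0 < w x}) := by
          apply measure_mono
          intro x hx
          by_cases hxw : 0 < w x
          · exact Or.inl ⟨by simp only [Function.mem_support]; positivity, hx⟩
          · exact Or.inr hxw
      _ ≤ _ := measure_union_le _ _
  have hv0 : 0 < volume (cube a h) := by rw [cube_volume]; positivity
  exact lt_of_lt_of_le hv0 (by simpa using hmono)

lemma cubeAvg_nonneg {Q : Set (Fin n → ℝ)} {f : (Fin n → ℝ) → ℝ} (hf : ∀ x, 0 ≤ f x) :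
    0 ≤ cubeAvg Q f := by
  have : 0 ≤ ∫ y in Q, f y := integral_nonneg hf
  have h2 : (0:ℝ) ≤ (volume Q).toReal⁻¹ := by positivity
  exact mul_nonneg h2 this

lemma setIntegral_eq_cubeAvg_mul (a : Fin n → ℝ) {h : ℝ} (hh : 0 < h)
    (f : (Fin n → ℝ) → ℝ) :
    ∫ y in cube a h, f y = cubeAvg (cube a h) f * h ^ n := by
  have hv : (volume (cube a h)).toReal = h ^ n := cube_volume_toReal a hh.le
  have hne : (h:ℝ) ^ n ≠ 0 := by positivity
  rw [cubeAvg, hv]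
  field_simp

lemma cubeAvg_sub_const (a : Fin n → ℝ) {h : ℝ} (hh : 0 < h) {f : (Fin n → ℝ) → ℝ}
    (hf : IntegrableOn f (cube a h)) (c : ℝ) :
    cubeAvg (cube a h) (fun y => f y - c) = cubeAvg (cube a h) f - c := by
  have hv : (volume (cube a h)).toReal = h ^ n := cube_volume_toReal a hh.le
  have hne : (h:ℝ) ^ n ≠ 0 := by positivity
  rw [cubeAvg, cubeAvg, integral_sub hf
    (integrableOn_const (cube_volume_ne_top a h))]
  rw [setIntegral_const, measureReal_def, hv, smul_eq_mul]
  field_simp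

lemma abs_cubeAvg_le (Q : Set (Fin n → ℝ)) (f : (Fin n → ℝ) → ℝ) :
    |cubeAvg Q f| ≤ (volume Q).toReal⁻¹ * ∫ y in Q, |f y| := by
  rw [cubeAvg, abs_mul, abs_inv, abs_of_nonneg ENNReal.toReal_nonneg]
  have h2 : (0:ℝ) ≤ (volume Q).toReal⁻¹ := by positivity
  exact mul_le_mul_of_nonneg_left (by simpa [Real.norm_eq_abs] using norm_integral_le_integral_norm (μ := volume.restrict Q) f) h2

lemma cubeAvg_eq_setAverage (Q : Set (Fin n → ℝ)) (f : (Fin n → ℝ) → ℝ) :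
    cubeAvg Q f = ⨍ y in Q, f y := by
  rw [setAverage_eq, smul_eq_mul, cubeAvg, measureReal_def]

section Lip

variable {β : ℝ} {w b : (Fin n → ℝ) → ℝ}

lemma lipNorm_nonneg (hw : IsWeight w) (hb : MemLip β w b) : 0 ≤ lipNorm β w b := by
  set W := ∫ x in cube (0 : Fin n → ℝ) 1, w x with hW
  have hWpos : 0 < W := cube_weight_pos hw 0 one_pos
  have hel : W ^ (-(β / (n:ℝ))) * W⁻¹ * (∫ x in cube (0 : Fin n → ℝ) 1,
      |b x - cubeAvg (cube (0 : Fin n → ℝ) 1) b|) ∈ lipSet β w b :=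
    ⟨cube (0 : Fin n → ℝ) 1, isCube_cube one_pos, rfl⟩
  refine le_trans ?_ (le_csSup hb.2 hel)
  have h1 : (0:ℝ) ≤ W ^ (-(β / (n:ℝ))) := Real.rpow_nonneg hWpos.le _
  have h2 : (0:ℝ) ≤ ∫ x in cube (0 : Fin n → ℝ) 1,
      |b x - cubeAvg (cube (0 : Fin n → ℝ) 1) b| := integral_nonneg fun x => abs_nonneg _
  positivity

/-- The basic consequence of `b ∈ Lip_{β,w}` on each cube. -/
lemma lip_int_bound (hw : IsWeight w) (hb : MemLip β w b) (a : Fin n → ℝ) {h : ℝ}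
    (hh : 0 < h) :
    ∫ x in cube a h, |b x - cubeAvg (cube a h) b| ≤
      lipNorm β w b * (∫ x in cube a h, w x) ^ (β / (n:ℝ)) * ∫ x in cube a h, w x := by
  set W := ∫ x in cube a h, w x with hWdef
  set I := ∫ x in cube a h, |b x - cubeAvg (cube a h) b| with hIdef
  have hWpos : 0 < W := cube_weight_pos hw a hh
  have hWe : 0 < W ^ (β / (n:ℝ)) := Real.rpow_pos_of_pos hWpos _
  have hel : W ^ (-(β / (n:ℝ))) * W⁻¹ * I ∈ lipSet β w b := ⟨cube a h, isCube_cube hh, rfl⟩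
  have hle : W ^ (-(β / (n:ℝ))) * W⁻¹ * I ≤ lipNorm β w b := le_csSup hb.2 hel
  have hneg : W ^ (-(β / (n:ℝ))) = (W ^ (β / (n:ℝ)))⁻¹ := Real.rpow_neg hWpos.le _
  rw [hneg] at hle
  calc I = (W ^ (β / (n:ℝ)) * W) * ((W ^ (β / (n:ℝ)))⁻¹ * W⁻¹ * I) := by
        field_simp
    _ ≤ (W ^ (β / (n:ℝ)) * W) * lipNorm β w b := by
        apply mul_le_mul_of_nonneg_left hle (by positivity)
    _ = lipNorm β w b * W ^ (β / (n:ℝ)) * W := by ring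

end Lip

theorem my_geom_sum_le (r : ℝ) (hr0 : 0 ≤ r) (hr1 : r < 1) (j : ℕ) :
    ∑ i ∈ Finset.range j, r ^ i ≤ (1 - r)⁻¹ := by
  have h1 : (0:ℝ) < 1 - r := by linarith
  rw [geom_sum_eq (by linarith : r ≠ 1)]
  have heq : (r ^ j - 1) / (r - 1) = (1 - r ^ j) / (1 - r) := by
    rw [div_eq_div_iff (by linarith) (by linarith)]
    ring
  rw [heq, ← one_div]
  have h2 : (1 - r ^ j) ≤ 1 := by nlinarith [pow_nonneg hr0 j]
  gcongr

/-- A₁ upgrade: a single a.e. good set working simultaneously for all cubes. -/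
lemma goodset {w : (Fin n → ℝ) → ℝ} (hw : IsWeight w) {C₁ : ℝ} (hC₁ : 0 < C₁)
    (hA1 : ∀ Q : Set (Fin n → ℝ), IsCube Q →
      ∀ᵐ x ∂(volume.restrict Q), cubeAvg Q w ≤ C₁ * w x) :
    ∀ᵐ x ∂(volume : Measure (Fin n → ℝ)), ∀ (a : Fin n → ℝ) (h : ℝ), 0 < h →
      x ∈ cube a h → cubeAvg (cube a h) w ≤ (2 ^ n * C₁) * w x := by
  have key : ∀ᵐ x ∂(volume : Measure (Fin n → ℝ)), ∀ q : (Fin n → ℚ) × ℚ,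
      0 < (q.2 : ℝ) → x ∈ cube (fun i => ((q.1 i : ℝ))) (q.2 : ℝ) →
        cubeAvg (cube (fun i => ((q.1 i : ℝ))) (q.2 : ℝ)) w ≤ C₁ * w x := by
    rw [ae_all_iff]
    intro q
    by_cases hq : 0 < (q.2 : ℝ)
    · filter_upwards [ae_imp_of_ae_restrict
        (hA1 _ (isCube_cube (a := fun i => ((q.1 i : ℝ))) hq))] with x hx
      exact fun _ hxm => hx hxm
    · exact Filter.Eventually.of_forall fun x h' => absurd h' hq
  filter_upwards [key] with x hx a h hh hxah
  -- choose rational outer cube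
  have hq : ∀ i, ∃ q : ℚ, a i - h / 2 < (q:ℝ) ∧ (q:ℝ) < a i :=
    fun i => exists_rat_btwn (by linarith)
  choose q hq1 hq2 using hq
  obtain ⟨s, hs1, hs2⟩ : ∃ s : ℚ, 3 / 2 * h < (s:ℝ) ∧ (s:ℝ) < 2 * h :=
    exists_rat_btwn (by linarith)
  have hspos : (0:ℝ) < (s:ℝ) := by linarith
  have hsub : cube a h ⊆ cube (fun i => ((q i : ℝ))) (s:ℝ) := by
    apply cube_subset
    exact fun i => ⟨(hq2 i).le, by linarith [hq1 i]⟩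
  have hxm : x ∈ cube (fun i => ((q i : ℝ))) (s:ℝ) := hsub hxah
  have hgood := hx (q, s) hspos hxm
  -- compare the averages
  have hwint : IntegrableOn w (cube (fun i => ((q i : ℝ))) (s:ℝ)) :=
    integrableOn_cube hw.1 _ _
  have hmono : ∫ y in cube a h, w y ≤ ∫ y in cube (fun i => ((q i : ℝ))) (s:ℝ), w y :=
    setIntegral_mono_set hwint
      (Filter.Eventually.of_forall fun y => hw.2.1 y) (HasSubset.Subset.eventuallyLE hsub)
  have hWq := setIntegral_eq_cubeAvg_mul (fun i => ((q i : ℝ))) hspos w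
  have havgq_nonneg : 0 ≤ cubeAvg (cube (fun i => ((q i : ℝ))) (s:ℝ)) w :=
    cubeAvg_nonneg hw.2.1
  have hvol : (volume (cube a h)).toReal = h ^ n := cube_volume_toReal a hh.le
  have hhn : (0:ℝ) < h ^ n := by positivity
  rw [cubeAvg, hvol]
  rw [hWq] at hmono
  calc (h ^ n)⁻¹ * ∫ y in cube a h, w y
      ≤ (h ^ n)⁻¹ * (cubeAvg (cube (fun i => ((q i : ℝ))) (s:ℝ)) w * (s:ℝ) ^ n) := by
        exact mul_le_mul_of_nonneg_left hmono (by positivity)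
    _ ≤ (h ^ n)⁻¹ * ((C₁ * w x) * (2 * h) ^ n) := by
        apply mul_le_mul_of_nonneg_left _ (by positivity)
        exact mul_le_mul hgood (pow_le_pow_left₀ hspos.le (by linarith) n)
          (by positivity) (mul_nonneg hC₁.le (hw.2.1 x))
    _ = (2 ^ n * C₁) * w x := by
        rw [mul_pow]
        field_simp

/-- Measure decay for `A₁` weights when passing to a half-size subcube. -/
lemma decay {w : (Fin n → ℝ) → ℝ} (hw : IsWeight w) {C₁ : ℝ} (hC₁ : 0 < C₁)
    (hA1 : ∀ Q : Set (Fin n → ℝ), IsCube Q →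
      ∀ᵐ x ∂(volume.restrict Q), cubeAvg Q w ≤ C₁ * w x)
    (a a' : Fin n → ℝ) {h : ℝ} (hh : 0 < h)
    (hsub : cube a' (h / 2) ⊆ cube a h) :
    ∫ y in cube a' (h / 2), w y ≤
      (1 - min ((1 - (1/2:ℝ) ^ n) / C₁) 2⁻¹) * ∫ y in cube a h, w y := by
  have hPw : IntegrableOn w (cube a h) := integrableOn_cube hw.1 a h
  have hSw : IntegrableOn w (cube a h \ cube a' (h / 2)) := hPw.mono_set diff_subset
  have hQ'w : IntegrableOn w (cube a' (h / 2)) := hPw.mono_set hsub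
  have hae : ∀ᵐ y ∂(volume.restrict (cube a h \ cube a' (h / 2))),
      cubeAvg (cube a h) w ≤ C₁ * w y :=
    ae_restrict_of_ae_restrict_of_subset diff_subset (hA1 _ (isCube_cube hh))
  have hSfin : volume (cube a h \ cube a' (h / 2)) ≠ ⊤ :=
    (ne_top_of_le_ne_top (cube_volume_ne_top a h) (measure_mono diff_subset))
  have h1 : ∫ y in cube a h \ cube a' (h / 2), cubeAvg (cube a h) w ≤
      ∫ y in cube a h \ cube a' (h / 2), C₁ * w y :=
    integral_mono_ae (integrableOn_const hSfin) (hSw.const_mul C₁) hae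
  have hvolS : (volume (cube a h \ cube a' (h / 2))).toReal = h ^ n - (h / 2) ^ n := by
    rw [measure_diff hsub (measurableSet_cube a' (h / 2)).nullMeasurableSet
      (cube_volume_ne_top a' (h / 2)),
      ENNReal.toReal_sub_of_le (measure_mono hsub) (cube_volume_ne_top a h),
      cube_volume_toReal a hh.le, cube_volume_toReal a' (by linarith)]
  rw [setIntegral_const, smul_eq_mul, measureReal_def, hvolS, integral_const_mul] at h1
  have hvol : (volume (cube a h)).toReal = h ^ n := cube_volume_toReal a hh.le
  have hW0 : 0 ≤ ∫ y in cube a h, w y := integral_nonneg hw.2.1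
  have hhn : (0:ℝ) < h ^ n := by positivity
  have havg : cubeAvg (cube a h) w = (h ^ n)⁻¹ * ∫ y in cube a h, w y := by
    rw [cubeAvg, hvol]
  have hpow : (h / 2) ^ n = h ^ n * (1/2:ℝ) ^ n := by
    rw [div_pow, one_div_pow, div_eq_mul_one_div]
  have h2 : (1 - (1/2:ℝ) ^ n) * ∫ y in cube a h, w y ≤
      C₁ * ∫ y in cube a h \ cube a' (h / 2), w y := by
    calc (1 - (1/2:ℝ) ^ n) * ∫ y in cube a h, w y
        = (h ^ n - (h / 2) ^ n) * cubeAvg (cube a h) w := by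
          rw [havg, hpow]
          field_simp
      _ ≤ _ := h1
  have h3 := setIntegral_union (μ := volume) (f := w) disjoint_sdiff_self_right
    ((measurableSet_cube a h).diff (measurableSet_cube a' (h / 2))) hQ'w hSw
  rw [Set.union_diff_cancel hsub] at h3
  have hm1 : min ((1 - (1/2:ℝ) ^ n) / C₁) 2⁻¹ ≤ (1 - (1/2:ℝ) ^ n) / C₁ := min_le_left _ _
  have h4 : min ((1 - (1/2:ℝ) ^ n) / C₁) 2⁻¹ * ∫ y in cube a h, w y ≤
      ∫ y in cube a h \ cube a' (h / 2), w y := by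
    calc min ((1 - (1/2:ℝ) ^ n) / C₁) 2⁻¹ * ∫ y in cube a h, w y
        ≤ (1 - (1/2:ℝ) ^ n) / C₁ * ∫ y in cube a h, w y :=
          mul_le_mul_of_nonneg_right hm1 hW0
      _ ≤ _ := by
          rw [div_mul_eq_mul_div, div_le_iff₀ hC₁]
          calc (1 - (1/2:ℝ) ^ n) * ∫ y in cube a h, w y
              ≤ C₁ * ∫ y in cube a h \ cube a' (h / 2), w y := h2
            _ = (∫ y in cube a h \ cube a' (h / 2), w y) * C₁ := by ring
  linarith

/-- Corner of the `j`-th cube of a halving chain of cubes containing `x`. -/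
def chainCorner (x a : Fin n → ℝ) (h : ℝ) : ℕ → Fin n → ℝ
  | 0 => a
  | j + 1 => fun i =>
      if x i ≤ chainCorner x a h j i + h / 2 ^ (j + 1) then chainCorner x a h j i
      else chainCorner x a h j i + h / 2 ^ (j + 1)

lemma half_side {h : ℝ} (j : ℕ) : h / 2 ^ (j + 1) = (h / 2 ^ j) / 2 := by
  rw [pow_succ]
  ring

lemma chain_mem {x a : Fin n → ℝ} {h : ℝ} (hh : 0 < h) (hx : x ∈ cube a h) :
    ∀ j, x ∈ cube (chainCorner x a h j) (h / 2 ^ j) := by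
  intro j
  induction j with
  | zero => simpa [chainCorner] using hx
  | succ j ih =>
      rw [mem_cube] at ih ⊢
      intro i
      have h2 : h / 2 ^ (j + 1) = (h / 2 ^ j) / 2 := half_side j
      have hpos : 0 < h / 2 ^ j := by positivity
      obtain ⟨ih1, ih2⟩ := ih i
      show chainCorner x a h (j+1) i ≤ x i ∧ x i ≤ chainCorner x a h (j+1) i + h / 2 ^ (j+1)
      simp only [chainCorner]
      split_ifs with hc
      · exact ⟨ih1, hc⟩
      · push_neg at hc
        exact ⟨hc.le, by linarith⟩

lemma chain_subset {x a : Fin n → ℝ} {h : ℝ} (hh : 0 < h) (j : ℕ) :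
    cube (chainCorner x a h (j + 1)) (h / 2 ^ (j + 1)) ⊆
      cube (chainCorner x a h j) (h / 2 ^ j) := by
  apply cube_subset
  intro i
  have h2 : h / 2 ^ (j + 1) = (h / 2 ^ j) / 2 := half_side j
  have hpos : 0 < h / 2 ^ j := by positivity
  simp only [chainCorner]
  split_ifs with hc
  · exact ⟨le_rfl, by linarith⟩
  · exact ⟨by linarith, by linarith⟩

end LipAux

/-- **Lemma 2.2.** For `w ∈ A₁` and `b ∈ Lip_{β,w}`:
`|b(x) - b_Q| ≤ C ‖b‖_{Lip_{β,w}} w(Q)^{β/n} w(x)` for a.e. `x ∈ Q`. -/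
theorem lip_sub_avg_pointwise_bound
    (n : ℕ) (hn : 1 ≤ n) (w : (Fin n → ℝ) → ℝ) (hw : IsA1 w)
    (β : ℝ) (hβ0 : 0 < β) (hβ1 : β < 1)
    (b : (Fin n → ℝ) → ℝ) (hb : MemLip β w b) :
    ∃ C > 0, ∀ Q : Set (Fin n → ℝ), IsCube Q →
      ∀ᵐ x ∂(MeasureTheory.volume.restrict Q),
        |b x - cubeAvg Q b| ≤
          C * lipNorm β w b * (∫ y in Q, w y) ^ (β / (n : ℝ)) * w x := by
  classical
  open LipAux Filter Set Metric in
  obtain ⟨hwW, C₁, hC₁, hA1⟩ := hw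
  have hwnn : ∀ x, 0 ≤ w x := hwW.2.1
  have hbli : MeasureTheory.LocallyIntegrable b := hb.1
  have hn' : (0:ℝ) < (n:ℝ) := by exact_mod_cast Nat.pos_of_ne_zero (by omega)
  have he : 0 < β / (n:ℝ) := by positivity
  set N := lipNorm β w b with hNdef
  have hN0 : 0 ≤ N := lipNorm_nonneg hwW hb
  set m := min ((1 - (1/2:ℝ) ^ n) / C₁) 2⁻¹ with hmdef
  have hhalf : (1/2:ℝ) ^ n < 1 := pow_lt_one₀ (by norm_num) (by norm_num) (by omega)
  have hmpos : 0 < m := lt_min (div_pos (by linarith) hC₁) (by norm_num)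
  have hmle : m ≤ 2⁻¹ := min_le_right _ _
  set θ := 1 - m with hθdef
  have hθ0 : 0 ≤ θ := by rw [hθdef]; linarith
  have hθ1 : θ < 1 := by rw [hθdef]; linarith
  set r := θ ^ (β / (n:ℝ)) with hrdef
  have hr0 : 0 ≤ r := Real.rpow_nonneg hθ0 _
  have hr1 : r < 1 := Real.rpow_lt_one hθ0 hθ1 he
  have hr1' : (0:ℝ) < 1 - r := by linarith
  set C₂ := (2:ℝ) ^ n * C₁ with hC₂def
  have hC₂ : 0 < C₂ := by positivity
  refine ⟨(2:ℝ) ^ n * C₂ * (1 - r)⁻¹, by positivity, ?_⟩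
  intro Q hQ
  obtain ⟨a, h, hh, hQeq⟩ := hQ
  have hQc : Q = cube a h := hQeq
  subst hQc
  have hhj : ∀ j : ℕ, (0:ℝ) < h / 2 ^ j := fun j => by positivity
  set W := ∫ y in cube a h, w y with hWdef
  have hW0 : 0 ≤ W := integral_nonneg hwnn
  filter_upwards [(goodset hwW hC₁ hA1).filter_mono (ae_mono Measure.restrict_le_self),
    ((IsUnifLocDoublingMeasure.ae_tendsto_average
        (volume : Measure (Fin n → ℝ)) hbli 1).filter_mono (ae_mono Measure.restrict_le_self)),
    ae_restrict_mem (measurableSet_cube a h)] with x hgood hdiff hxQ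
  set c := chainCorner x a h with hcdef
  set P : ℕ → Set (Fin n → ℝ) := fun j => cube (c j) (h / 2 ^ j) with hPdef
  set A : ℕ → ℝ := fun j => cubeAvg (P j) b with hAdef
  set Wf : ℕ → ℝ := fun j => ∫ y in P j, w y with hWfdef
  have hP0 : P 0 = cube a h := by
    rw [hPdef]
    simp only [pow_zero, div_one]
    rfl
  have hmem : ∀ j, x ∈ P j := fun j => chain_mem hh hxQ j
  have hsubP : ∀ j, P (j+1) ⊆ P j := fun j => chain_subset hh j
  have hWpos : ∀ j, 0 < Wf j := fun j => cube_weight_pos hwW _ (hhj j)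
  have hWdecay : ∀ j, Wf j ≤ θ ^ j * W := by
    intro j
    induction j with
    | zero => simp [hWfdef, hP0, hWdef]
    | succ j ih =>
        have hstep : Wf (j+1) ≤ θ * Wf j := by
          have h2 : h / 2 ^ (j+1) = (h / 2 ^ j) / 2 := half_side j
          have := decay hwW hC₁ hA1 (c j) (c (j+1)) (hhj j)
            (by rw [← h2]; exact hsubP j)
          rw [← h2] at this
          exact this
        calc Wf (j+1) ≤ θ * Wf j := hstep
          _ ≤ θ * (θ ^ j * W) := mul_le_mul_of_nonneg_left ih hθ0
          _ = θ ^ (j+1) * W := by rw [pow_succ]; ring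
  have hWe : ∀ j, (Wf j) ^ (β / (n:ℝ)) ≤ r ^ j * W ^ (β / (n:ℝ)) := by
    intro j
    have h1 : (Wf j) ^ (β / (n:ℝ)) ≤ (θ ^ j * W) ^ (β / (n:ℝ)) :=
      Real.rpow_le_rpow (hWpos j).le (hWdecay j) he.le
    have h2 : (θ ^ j * W) ^ (β / (n:ℝ)) = r ^ j * W ^ (β / (n:ℝ)) := by
      rw [Real.mul_rpow (by positivity) hW0, hrdef, ← Real.rpow_natCast θ j,
        ← Real.rpow_mul hθ0, mul_comm (j:ℝ) (β / (n:ℝ)), Real.rpow_mul hθ0,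
        Real.rpow_natCast]
    rw [h2] at h1
    exact h1
  set K := (2:ℝ) ^ n * C₂ * N * W ^ (β / (n:ℝ)) * w x with hKdef
  have hK0 : 0 ≤ K := by
    have := hwnn x
    have : (0:ℝ) ≤ W ^ (β / (n:ℝ)) := Real.rpow_nonneg hW0 _
    positivity
  have hstep : ∀ j, |A (j+1) - A j| ≤ K * r ^ j := by
    intro j
    have hbintj : IntegrableOn b (P j) := integrableOn_cube hbli _ _
    have hbintj' : IntegrableOn (fun y => |b y - A j|) (P j) := by
      have : IntegrableOn (fun y => b y - A j) (P j) :=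
        hbintj.sub (integrableOn_const (cube_volume_ne_top _ _))
      exact this.abs
    have h1 : A (j+1) - A j = cubeAvg (P (j+1)) (fun y => b y - A j) :=
      (cubeAvg_sub_const (c (j+1)) (hhj (j+1)) (integrableOn_cube hbli _ _) (A j)).symm
    have h2 : |cubeAvg (P (j+1)) (fun y => b y - A j)| ≤
        (volume (P (j+1))).toReal⁻¹ * ∫ y in P (j+1), |b y - A j| := abs_cubeAvg_le _ _
    have h3 : ∫ y in P (j+1), |b y - A j| ≤ ∫ y in P j, |b y - A j| :=
      setIntegral_mono_set hbintj' (Filter.Eventually.of_forall fun y => abs_nonneg _)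
        (HasSubset.Subset.eventuallyLE (hsubP j))
    have h4 : ∫ y in P j, |b y - A j| ≤ N * (Wf j) ^ (β / (n:ℝ)) * Wf j :=
      lip_int_bound hwW hb (c j) (hhj j)
    have h5 : Wf j = cubeAvg (P j) w * (h / 2 ^ j) ^ n :=
      setIntegral_eq_cubeAvg_mul (c j) (hhj j) w
    have h6 : cubeAvg (P j) w ≤ C₂ * w x := hgood (c j) (h / 2 ^ j) (hhj j) (hmem j)
    have hv1 : (volume (P (j+1))).toReal = (h / 2 ^ j) ^ n / 2 ^ n := by
      rw [hPdef]
      rw [cube_volume_toReal (c (j+1)) (hhj (j+1)).le, half_side j, div_pow]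
    have hu : (0:ℝ) < (h / 2 ^ j) ^ n := by positivity
    have havgw0 : 0 ≤ cubeAvg (P j) w := cubeAvg_nonneg hwnn
    have hWfe0 : (0:ℝ) ≤ (Wf j) ^ (β / (n:ℝ)) := Real.rpow_nonneg (hWpos j).le _
    calc |A (j+1) - A j|
        ≤ (volume (P (j+1))).toReal⁻¹ * ∫ y in P (j+1), |b y - A j| := by rw [h1]; exact h2
      _ ≤ (volume (P (j+1))).toReal⁻¹ * (N * (Wf j) ^ (β / (n:ℝ)) * Wf j) := by
          apply mul_le_mul_of_nonneg_left (h3.trans h4) (by positivity)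
      _ = (2:ℝ) ^ n * N * ((Wf j) ^ (β / (n:ℝ)) * cubeAvg (P j) w) := by
          rw [hv1, h5]
          field_simp
      _ ≤ (2:ℝ) ^ n * N * ((r ^ j * W ^ (β / (n:ℝ))) * (C₂ * w x)) := by
          apply mul_le_mul_of_nonneg_left _ (by positivity)
          exact mul_le_mul (hWe j) h6 havgw0 (by positivity)
      _ = K * r ^ j := by rw [hKdef]; ring
  have htel : ∀ j, |A j - A 0| ≤ K * (1 - r)⁻¹ := by
    intro j
    have hsum : A j - A 0 = ∑ i ∈ Finset.range j, (A (i+1) - A i) :=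
      (Finset.sum_range_sub A j).symm
    rw [hsum]
    refine (Finset.abs_sum_le_sum_abs _ _).trans ?_
    calc ∑ i ∈ Finset.range j, |A (i+1) - A i|
        ≤ ∑ i ∈ Finset.range j, K * r ^ i := Finset.sum_le_sum fun i _ => hstep i
      _ = K * ∑ i ∈ Finset.range j, r ^ i := by rw [Finset.mul_sum]
      _ ≤ K * (1 - r)⁻¹ :=
          mul_le_mul_of_nonneg_left (my_geom_sum_le r hr0 hr1 j) hK0
  have hlim : Filter.Tendsto A Filter.atTop (nhds (b x)) := by
    have hδ0 : Filter.Tendsto (fun j : ℕ => (h / 2 ^ j) / 2) Filter.atTop (nhds 0) := by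
      have h0 : Filter.Tendsto (fun j : ℕ => (2⁻¹:ℝ) ^ j) Filter.atTop (nhds 0) :=
        tendsto_pow_atTop_nhds_zero_of_lt_one (by norm_num) (by norm_num)
      have h1 := h0.const_mul (h / 2)
      rw [mul_zero] at h1
      refine h1.congr fun j => ?_
      rw [inv_pow]
      field_simp
    have hδ : Filter.Tendsto (fun j : ℕ => (h / 2 ^ j) / 2) Filter.atTop (nhdsWithin 0 (Set.Ioi 0)) := by
      apply tendsto_nhdsWithin_of_tendsto_nhds_of_eventually_within _ hδ0
      exact Filter.Eventually.of_forall fun j => by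
        have := hhj j
        exact Set.mem_Ioi.mpr (by positivity)
    have hev : ∀ᶠ j in Filter.atTop,
        x ∈ closedBall (fun i => c j i + (h / 2 ^ j) / 2) (1 * ((h / 2 ^ j) / 2)) := by
      refine Filter.Eventually.of_forall fun j => ?_
      rw [one_mul, ← cube_eq_closedBall (c j) (hhj j).le]
      exact hmem j
    have htends := hdiff (fun j => fun i => c j i + (h / 2 ^ j) / 2)
      (fun j : ℕ => (h / 2 ^ j) / 2) hδ hev
    refine htends.congr fun j => ?_
    rw [← cube_eq_closedBall (c j) (hhj j).le, ← cubeAvg_eq_setAverage]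
  have hfinal : |b x - A 0| ≤ K * (1 - r)⁻¹ := by
    have habs : Filter.Tendsto (fun j => |A j - A 0|) Filter.atTop (nhds (|b x - A 0|)) :=
      ((hlim.sub_const (A 0)).abs)
    exact le_of_tendsto habs (Filter.Eventually.of_forall htel)
  have hA0 : A 0 = cubeAvg (cube a h) b := by
    rw [show A 0 = cubeAvg (P 0) b from rfl, hP0]
  show |b x - cubeAvg (cube a h) b| ≤
    (2:ℝ) ^ n * C₂ * (1 - r)⁻¹ * N * W ^ (β / (n:ℝ)) * w x
  rw [← hA0]
  calc |b x - A 0| ≤ K * (1 - r)⁻¹ := hfinal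
    _ = (2:ℝ) ^ n * C₂ * (1 - r)⁻¹ * N * W ^ (β / (n:ℝ)) * w x := by rw [hKdef]; ring


end
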